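/- Let Ω = {i_1, i_2} ⊂ ℤ_d with i_1 ≠ i_2. Then for every circular convolution operator A ∈ 𝒜_2, the family Y = {e_i, A e_i, …, A^{N_A−1} e_i : i ∈ Ω} is a frame for ℓ²(ℤ_d) if and only if gcd(|i_1 − i_2|, d) = 1. -/

import Mathlib

open Matrix

/-- Unnormalized discrete Fourier transform of `a : ZMod d → ℂ`. -/
noncomputable def hatKer (d : ℕ) [NeZero d] (a : ZMod d → ℂ) : ZMod d → ℂ :=
  fun j => ∑ k : ZMod d,
    a k * Complex.exp (-(2 * (Real.pi : ℂ) * Complex.I) * ((j.val : ℂ) * (k.val : ℂ)) / (d : ℂ))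

/-- The circular convolution operator with kernel `a`, as a matrix. -/
def convMat (d : ℕ) (a : ZMod d → ℂ) : Matrix (ZMod d) (ZMod d) ℂ :=
  Matrix.of fun k i => a (k - i)

/-- The normalized discrete Fourier matrix `F_d`. -/
noncomputable def FdMat (d : ℕ) : Matrix (ZMod d) (ZMod d) ℂ :=
  Matrix.of fun j k =>
    ((Real.sqrt d : ℝ) : ℂ)⁻¹ *
      Complex.exp (-(2 * (Real.pi : ℂ) * Complex.I) * ((j.val : ℂ) * (k.val : ℂ)) / (d : ℂ))

/-- The largest geometric multiplicity of an eigenvalue of `diag b`, i.e. the size of the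
largest level set of `b`. -/
noncomputable def maxMult (d : ℕ) [NeZero d] (b : ZMod d → ℂ) : ℕ :=
  Finset.univ.sup fun j : ZMod d => Nat.card {t : ZMod d | b t = b j}

/-- The number of distinct eigenvalues of `diag b`. -/
noncomputable def numEig (d : ℕ) [NeZero d] (b : ZMod d → ℂ) : ℕ :=
  Nat.card (Set.range b)

/-! The discrete Fourier transform diagonalizes circular convolution: `𝓕 (A ^ n e_i) = b ^ n · χ_i`
with `b = â` and `χ_i k = exp (-2πi · i k / d)`. Lagrange interpolation in the `N_A` distinct values
of `b` cuts these vectors down to any level set `L` of `b`, so `Y` is a frame exactly when on every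
level set the restrictions of `χ_{i₁}` and `χ_{i₂}` span `ℂ^L`. For `L = {j₀, j₁}` the relevant
`2 × 2` determinant vanishes iff `(i₁ - i₂) (j₀ - j₁) = 0` in `ℤ_d`. Hence a unit `i₁ - i₂` always
works, while a zero divisor, killed by some `δ ≠ 0`, fails for a symbol whose only non-trivial
level set is `{0, δ}`. -/

open Submodule

theorem levelSet_eq_singleton_or_pair {ι α : Type*} [Finite ι] {b : ι → α} {j₀ : ι}
    (hb : Nat.card {t | b t = b j₀} ≤ 2) :
    (∀ j, b j = b j₀ → j = j₀) ∨
      ∃ j₁ ≠ j₀, b j₁ = b j₀ ∧ ∀ j, b j = b j₀ → j = j₀ ∨ j = j₁ := by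
  by_cases h : ∃ j₁ ≠ j₀, b j₁ = b j₀
  · obtain ⟨j₁, hj₁, hb₁⟩ := h
    refine Or.inr ⟨j₁, hj₁, hb₁, fun j hj => ?_⟩
    by_contra! hj'
    have hsub : {j₀, j₁, j} ⊆ {t | b t = b j₀} := by
      rintro t (rfl | rfl | rfl) <;> simp [hb₁, hj]
    have h3 := Set.ncard_le_ncard hsub (Set.toFinite _)
    rw [Set.ncard_eq_three.2 ⟨j₀, j₁, j, hj₁.symm, Ne.symm hj'.1, Ne.symm hj'.2, rfl⟩] at h3
    rw [Nat.card_coe_set_eq] at hb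
    omega
  · exact Or.inl fun j hj => by_contra fun hj' => h ⟨j, hj', hj⟩

section DiagonalOrbits

variable {ι κ K : Type*} [Field K]

def diagOrbits (b : ι → K) (w : κ → ι → K) (Ω : Set κ) (N : ℕ) : Set (ι → K) :=
  {v | ∃ i ∈ Ω, ∃ n < N, v = b ^ n * w i}

theorem eval_mul_mem_span_diagOrbits (b : ι → K) (w : κ → ι → K) {Ω : Set κ} {N : ℕ}
    {i : κ} (hi : i ∈ Ω) {p : Polynomial K} (hp : p.natDegree < N) :
    (fun j => p.eval (b j) * w i j) ∈ span K (diagOrbits b w Ω N) := by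
  have hsum : (fun j => p.eval (b j) * w i j) =
      ∑ n ∈ Finset.range N, p.coeff n • (b ^ n * w i) := by
    ext j
    simp only [Polynomial.eval_eq_sum_range' hp, Finset.sum_apply, Finset.sum_mul, Pi.smul_apply,
      Pi.mul_apply, Pi.pow_apply, smul_eq_mul, mul_assoc]
  rw [hsum]
  exact sum_mem fun n hn => smul_mem _ _ (subset_span ⟨i, hi, n, Finset.mem_range.1 hn, rfl⟩)

theorem ite_mem_span_diagOrbits [Fintype ι] [DecidableEq K] (b : ι → K) (w : κ → ι → K)
    {Ω : Set κ} {i : κ} (hi : i ∈ Ω) (j₀ : ι) :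
    (fun j => if b j = b j₀ then w i j else 0) ∈
      span K (diagOrbits b w Ω (Nat.card (Set.range b))) := by
  classical
  set s := Finset.univ.image b
  have hs : ∀ j, b j ∈ s := fun j => Finset.mem_image_of_mem b (Finset.mem_univ j)
  have hcard : Nat.card (Set.range b) = s.card := by
    rw [← Set.image_univ, ← Finset.coe_univ, ← Finset.coe_image, Nat.card_coe_set_eq,
      Set.ncard_coe_finset]
  set p := Lagrange.basis s id (b j₀)
  have hp : p.natDegree < Nat.card (Set.range b) := by
    rw [Lagrange.natDegree_basis (Set.injOn_id _) (hs j₀), hcard]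
    exact Nat.sub_lt (Finset.card_pos.2 ⟨_, hs j₀⟩) one_pos
  have hp₁ : p.eval (b j₀) = 1 := Lagrange.eval_basis_self (Set.injOn_id _) (hs j₀)
  have hp₀ (j : ι) (hj : b j ≠ b j₀) : p.eval (b j) = 0 :=
    Lagrange.eval_basis_of_ne (v := id) (Ne.symm hj) (hs j)
  convert eval_mul_mem_span_diagOrbits b w hi hp using 2 with j
  by_cases hj : b j = b j₀
  · rw [if_pos hj, hj, hp₁, one_mul]
  · rw [if_neg hj, hp₀ j hj, zero_mul]

theorem single_mem_span_singleton [DecidableEq ι] {j₀ : ι} {u : ι → K}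
    (hu : ∀ j, j ≠ j₀ → u j = 0) (hu₀ : u j₀ ≠ 0) : Pi.single j₀ 1 ∈ K ∙ u := by
  refine mem_span_singleton.2 ⟨(u j₀)⁻¹, funext fun j => ?_⟩
  by_cases hj : j = j₀
  · subst hj
    simp [hu₀]
  · simp [hj, hu j hj]

theorem single_mem_span_pair [DecidableEq ι] {j₀ j₁ : ι} (hj : j₀ ≠ j₁) {u v : ι → K}
    (hu : ∀ j, j ≠ j₀ → j ≠ j₁ → u j = 0) (hv : ∀ j, j ≠ j₀ → j ≠ j₁ → v j = 0)
    (hdet : u j₀ * v j₁ - u j₁ * v j₀ ≠ 0) : Pi.single j₀ 1 ∈ span K {u, v} := by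
  refine mem_span_pair.2 ⟨v j₁ / (u j₀ * v j₁ - u j₁ * v j₀),
    -u j₁ / (u j₀ * v j₁ - u j₁ * v j₀), funext fun j => ?_⟩
  simp only [Pi.add_apply, Pi.smul_apply, smul_eq_mul]
  by_cases hj₀ : j = j₀
  · subst hj₀
    rw [Pi.single_eq_same, div_mul_eq_mul_div, div_mul_eq_mul_div, ← add_div,
      div_eq_one_iff_eq hdet]
    ring
  by_cases hj₁ : j = j₁
  · subst hj₁
    field_simp
    simp [hj₀]
  · simp [hj₀, hu j hj₀ hj₁, hv j hj₀ hj₁]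

theorem span_diagOrbits_ne_top (b : ι → K) (w : κ → ι → K) (Ω : Set κ) (N : ℕ) {j₀ j₁ : ι}
    (hj : j₀ ≠ j₁) (hb : b j₀ = b j₁) (c : K) (hw : ∀ i ∈ Ω, w i j₁ = c * w i j₀) :
    span K (diagOrbits b w Ω N) ≠ ⊤ := by
  classical
  let φ : (ι → K) →ₗ[K] K := c • LinearMap.proj j₀ - LinearMap.proj j₁
  have hker : span K (diagOrbits b w Ω N) ≤ LinearMap.ker φ := by
    refine span_le.2 ?_
    rintro _ ⟨i, hi, n, -, rfl⟩
    simp [φ, hb, hw i hi]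
    ring
  intro htop
  have h := hker (htop ▸ mem_top : Pi.single j₁ 1 ∈ span K (diagOrbits b w Ω N))
  simp [φ, hj] at h

end DiagonalOrbits

section Fourier

open ZMod

variable {d : ℕ} [NeZero d]

theorem hatKer_eq_dft (a : ZMod d → ℂ) : hatKer d a = 𝓕 a := by
  ext j
  rw [hatKer, dft_apply]
  refine Finset.sum_congr rfl fun k _ => ?_
  have hcast : -(k * j) = (Int.cast (-(k.val * j.val : ℤ)) : ZMod d) := by simp
  rw [smul_eq_mul, mul_comm, hcast, stdAddChar_coe]
  push_cast
  ring_nf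

theorem dft_convMat_mulVec (a f : ZMod d → ℂ) : 𝓕 (convMat d a *ᵥ f) = 𝓕 a * 𝓕 f := by
  ext k
  simp only [dft_apply, Pi.mul_apply, mulVec, dotProduct, convMat, of_apply, smul_eq_mul,
    Finset.mul_sum, Finset.sum_mul]
  rw [Finset.sum_comm]
  refine Finset.sum_congr rfl fun m _ => ?_
  refine Fintype.sum_equiv (Equiv.subRight m) _ _ fun j => ?_
  have hchar : stdAddChar (-(j * k)) = stdAddChar (-((j - m) * k)) * stdAddChar (-(m * k)) := by
    rw [← AddChar.map_add_eq_mul]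
    ring_nf
  rw [Equiv.subRight_apply, hchar]
  ring

theorem dft_convMat_pow_mulVec (a f : ZMod d → ℂ) (n : ℕ) :
    𝓕 (convMat d a ^ n *ᵥ f) = 𝓕 a ^ n * 𝓕 f := by
  induction n with
  | zero => simp
  | succ n ih => rw [pow_succ', ← mulVec_mulVec, dft_convMat_mulVec, ih, pow_succ', mul_assoc]

theorem dft_single_one_apply (i k : ZMod d) :
    𝓕 (Pi.single i (1 : ℂ)) k = stdAddChar (-(i * k)) := by
  simp [dft_apply, Pi.single_apply]

end Fourier

theorem exists_ne_zero_mul_eq_zero_of_not_isUnit {R : Type*} [CommRing R] [Finite R] {x : R}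
    (hx : ¬IsUnit x) : ∃ y ≠ 0, x * y = 0 := by
  simp only [isUnit_iff_mem_nonZeroDivisors_of_finite, mem_nonZeroDivisors_iff, mul_comm _ x,
    and_self, not_forall] at hx
  obtain ⟨y, hy, hne⟩ := hx
  exact ⟨y, hne, hy⟩

section Frame

open ZMod

variable {d : ℕ} [NeZero d]

theorem isUnit_iff_gcd_val_eq_one (x : ZMod d) : IsUnit x ↔ Nat.gcd x.val d = 1 := by
  simpa only [natCast_zmod_val, Nat.coprime_iff_gcd_eq_one] using isUnit_iff_coprime x.val d

theorem card_levelSet_le_maxMult (b : ZMod d → ℂ) (j : ZMod d) :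
    Nat.card {t | b t = b j} ≤ maxMult d b :=
  Finset.le_sup (f := fun j => Nat.card {t | b t = b j}) (Finset.mem_univ j)

theorem exists_maxMult_eq_two {δ : ZMod d} (hδ : δ ≠ 0) :
    ∃ b : ZMod d → ℂ, maxMult d b = 2 ∧ b 0 = b δ := by
  let f : ZMod d → ZMod d := fun j => if j = δ then 0 else j
  let b : ZMod d → ℂ := fun j => ((f j).val : ℂ)
  have hb0 : b 0 = b δ := by simp [b, f]
  have hlevel (j : ZMod d) : {t | b t = b j} ⊆ {j, Equiv.swap 0 δ j} := by
    intro t ht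
    have hf : f t = f j := val_injective d (Nat.cast_injective ht)
    simp only [f] at hf
    simp only [Set.mem_insert_iff, Set.mem_singleton_iff, Equiv.swap_apply_def]
    split_ifs at hf ⊢ <;> grind
  refine ⟨b, le_antisymm (Finset.sup_le fun j _ => ?_) ?_, hb0⟩
  · rw [Nat.card_coe_set_eq]
    exact (Set.ncard_le_ncard (hlevel j) (Set.toFinite _)).trans
      ((Set.ncard_insert_le _ _).trans (by rw [Set.ncard_singleton]))
  · have hpair : {0, δ} ⊆ {t | b t = b 0} := by
      rintro t (rfl | rfl) <;> simp [hb0]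
    calc 2 = Set.ncard {0, δ} := (Set.ncard_pair hδ.symm).symm
      _ ≤ Nat.card {t | b t = b 0} := by
        rw [Nat.card_coe_set_eq]
        exact Set.ncard_le_ncard hpair (Set.toFinite _)
      _ ≤ maxMult d b := card_levelSet_le_maxMult b 0

theorem stdAddChar_mul_sub_mul_ne_zero {i₁ i₂ j₀ j₁ : ZMod d} (hi : IsUnit (i₁ - i₂))
    (hj : j₀ ≠ j₁) :
    stdAddChar (-(i₁ * j₀)) * stdAddChar (-(i₂ * j₁)) -
      stdAddChar (-(i₁ * j₁)) * stdAddChar (-(i₂ * j₀)) ≠ (0 : ℂ) := by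
  rw [sub_ne_zero, ← AddChar.map_add_eq_mul, ← AddChar.map_add_eq_mul, injective_stdAddChar.ne_iff]
  intro h
  have h' : (i₁ - i₂) * (j₀ - j₁) = 0 := by linear_combination -h
  exact hj (sub_eq_zero.1 (hi.mul_right_eq_zero.1 h'))

theorem span_diagOrbits_dft_single_eq_top {b : ZMod d → ℂ}
    (hb : ∀ j, Nat.card {t | b t = b j} ≤ 2) {i₁ i₂ : ZMod d} (hi : IsUnit (i₁ - i₂)) :
    span ℂ (diagOrbits b (fun i => 𝓕 (Pi.single i 1)) {i₁, i₂} (Nat.card (Set.range b))) = ⊤ := by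
  set S := span ℂ (diagOrbits b (fun i => 𝓕 (Pi.single i 1)) {i₁, i₂} (Nat.card (Set.range b)))
  have hmem (i : ZMod d) (hi : i ∈ ({i₁, i₂} : Set (ZMod d))) (j₀ : ZMod d) :=
    ite_mem_span_diagOrbits b (fun i => 𝓕 (Pi.single i (1 : ℂ))) hi j₀
  suffices h : ∀ j₀, Pi.single j₀ (1 : ℂ) ∈ S by
    refine eq_top_iff.2 ((Pi.basisFun ℂ _).span_eq.symm.le.trans (span_le.2 ?_))
    rintro _ ⟨j, rfl⟩
    simpa using h j
  intro j₀
  rcases levelSet_eq_singleton_or_pair (hb j₀) with hsingle | ⟨j₁, hj₁, hb₁, hpair⟩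
  · refine span_le.2 (Set.singleton_subset_iff.2 (hmem i₁ (Or.inl rfl) j₀))
      (single_mem_span_singleton (fun j hj => if_neg (mt (hsingle j) hj)) ?_)
    simp [dft_single_one_apply, stdAddChar_apply]
  · refine span_le.2 (Set.insert_subset (hmem i₁ (Or.inl rfl) j₀)
      (Set.singleton_subset_iff.2 (hmem i₂ (Or.inr rfl) j₀)))
      (single_mem_span_pair hj₁.symm ?_ ?_ ?_)
    · exact fun j h₀ h₁ => if_neg fun hj => (hpair j hj).elim h₀ h₁
    · exact fun j h₀ h₁ => if_neg fun hj => (hpair j hj).elim h₀ h₁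
    · simp only [if_pos hb₁, dft_single_one_apply, if_true]
      exact stdAddChar_mul_sub_mul_ne_zero hi hj₁.symm

theorem span_convMat_orbits_eq_top_iff (a : ZMod d → ℂ) (Ω : Set (ZMod d)) (N : ℕ) :
    span ℂ {v | ∃ i ∈ Ω, ∃ n < N, v = convMat d a ^ n *ᵥ Pi.single i 1} = ⊤ ↔
      span ℂ (diagOrbits (hatKer d a) (fun i => 𝓕 (Pi.single i 1)) Ω N) = ⊤ := by
  have himage : 𝓕 '' {v | ∃ i ∈ Ω, ∃ n < N, v = convMat d a ^ n *ᵥ Pi.single i 1} =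
      diagOrbits (hatKer d a) (fun i => 𝓕 (Pi.single i 1)) Ω N := by
    ext v
    constructor
    · rintro ⟨_, ⟨i, hi, n, hn, rfl⟩, rfl⟩
      exact ⟨i, hi, n, hn, by rw [dft_convMat_pow_mulVec, hatKer_eq_dft]⟩
    · rintro ⟨i, hi, n, hn, rfl⟩
      exact ⟨_, ⟨i, hi, n, hn, rfl⟩, by rw [dft_convMat_pow_mulVec, hatKer_eq_dft]⟩
  rw [← himage, span_image_linearEquiv, Submodule.map_eq_top_iff]

end Frame

theorem stmt5_general (d : ℕ) [NeZero d] (i₁ i₂ : ZMod d) :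
    (∀ a : ZMod d → ℂ, maxMult d (hatKer d a) = 2 →
      Submodule.span ℂ {v : ZMod d → ℂ | ∃ i : ZMod d, (i = i₁ ∨ i = i₂) ∧
          ∃ n < numEig d (hatKer d a),
          v = (convMat d a) ^ n *ᵥ (Pi.single i 1 : ZMod d → ℂ)} = ⊤)
    ↔ Nat.gcd (i₁ - i₂).val d = 1 := by
  have hframe (a : ZMod d → ℂ) :=
    span_convMat_orbits_eq_top_iff a {i₁, i₂} (numEig d (hatKer d a))
  rw [← isUnit_iff_gcd_val_eq_one]
  constructor
  · intro H
    by_contra hi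
    obtain ⟨δ, hδ, hδi⟩ := exists_ne_zero_mul_eq_zero_of_not_isUnit hi
    obtain ⟨b, hb2, hb0⟩ := exists_maxMult_eq_two hδ
    have hb : hatKer d (ZMod.dft.symm b) = b := by rw [hatKer_eq_dft, LinearEquiv.apply_symm_apply]
    refine span_diagOrbits_ne_top b _ {i₁, i₂} _ hδ.symm hb0 (ZMod.stdAddChar (-(i₁ * δ))) ?_
      (hb ▸ (hframe _).1 (H _ (hb ▸ hb2)))
    rintro i (rfl | rfl)
    · simp [dft_single_one_apply]
    · simp only [dft_single_one_apply, mul_zero, neg_zero, AddChar.map_zero_eq_one, mul_one]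
      congr 2
      linear_combination -hδi
  · intro hi a ha
    exact (hframe a).2 (span_diagOrbits_dft_single_eq_top
      (fun j => ha ▸ card_levelSet_le_maxMult _ j) hi)

/-- for `Ω = {i₁, i₂}` with `i₁ ≠ i₂`, the family
`Y = {A^n e_i : i ∈ Ω, n ≤ N_A - 1}` is a frame for every circular convolution operator
`A ∈ 𝒜_2` iff `gcd(|i₁ - i₂|, d) = 1`. -/
theorem stmt5 (d : ℕ) [NeZero d] (i₁ i₂ : ZMod d) (hne : i₁ ≠ i₂) :
    (∀ a : ZMod d → ℂ, maxMult d (hatKer d a) = 2 →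
      Submodule.span ℂ {v : ZMod d → ℂ | ∃ i : ZMod d, (i = i₁ ∨ i = i₂) ∧
          ∃ n < numEig d (hatKer d a),
          v = (convMat d a) ^ n *ᵥ (Pi.single i 1 : ZMod d → ℂ)} = ⊤)
    ↔ Nat.gcd (i₁ - i₂).val d = 1 :=
  stmt5_general d i₁ i₂
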